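/- arXiv:1808.03734 — 7 statements merged into one kernel-verified Lean document; each statement's English description precedes it below -/
import Mathlib

section
/- Let b > 0, a > 0, m ∈ ℕ, and let ŵ_0,…,ŵ_m be nonnegative reals with ŵ_0 > 0 and ∑_{k=0}^m ŵ_k = 1. Define L(λ) = b·∑_{k=0}^m ŵ_k e^{-kaλ} and R(λ) = aλ/(1-e^{-aλ}) (with R(0)=1). Then the equation L(λ) = R(λ) has exactly one real solution λ. Moreover the solution satisfies λ > 0 if b > 1, λ = 0 if b = 1, and λ < 0 if b < 1. -/
/-!
Write `R λ = φ (a λ)` with `φ x = x / (1 - e^{-x})`: this is the reciprocal of the slope of `exp`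
between `0` and `-x`, and taking `dslope` gives it the value `1 / exp' 0 = 1` at `0` for free.
Strict convexity of `exp` makes the slope strictly increasing, so `R` is continuous and strictly
increasing, while `L` is continuous and nonincreasing. As `λ → -∞`, `R → 0` whereas
`L ≥ b ŵ₀ > 0`; as `λ → ∞`, `R → ∞` whereas `L ≤ L 0 = b`. Hence `R - L` has exactly one zero,
and its sign is read off from `R 0 - L 0 = 1 - b`.
-/

open Real Set Filter Topology

theorem StrictConvexOn.strictMonoOn_dslope {S : Set ℝ} {f : ℝ → ℝ} {a : ℝ}
    (hf : StrictConvexOn ℝ S f) (ha : a ∈ S) (hfa : DifferentiableAt ℝ f a) :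
    StrictMonoOn (dslope f a) S := by
  intro x hx y hy hxy
  rcases eq_or_ne x a with rfl | hxa
  · rw [dslope_same, dslope_of_ne _ hxy.ne']
    exact hf.deriv_lt_slope hx hy hxy hfa
  rcases eq_or_ne y a with rfl | hya
  · rw [dslope_same, dslope_of_ne _ hxa, slope_comm]
    exact hf.slope_lt_deriv hx hy hxy hfa
  rw [dslope_of_ne _ hxa, dslope_of_ne _ hya, slope_def_field, slope_def_field]
  exact hf.secant_strict_mono ha hx hy hxa hya hxy

theorem StrictMono.sub_antitone {α β : Type*} [Preorder α] [AddCommGroup β] [PartialOrder β]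
    [IsOrderedAddMonoid β] {f g : α → β} (hf : StrictMono f) (hg : Antitone g) :
    StrictMono fun x => f x - g x := by
  simpa only [sub_eq_add_neg] using hf.add_monotone hg.neg

theorem existsUnique_eq_of_antitone_of_strictMono {f g : ℝ → ℝ} (hf : Antitone f)
    (hg : StrictMono g) (hfc : Continuous f) (hgc : Continuous g) {x y : ℝ}
    (hx : g x ≤ f x) (hy : f y ≤ g y) : ∃! z, f z = g z := by
  have hF := hg.sub_antitone hf
  have hxy : x ≤ y := hF.le_iff_le.1 (by linarith)
  obtain ⟨z, -, hz⟩ := intermediate_value_Icc hxy (hgc.sub hfc).continuousOn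
    (show (0 : ℝ) ∈ Icc (g x - f x) (g y - f y) from ⟨by linarith, by linarith⟩)
  rw [Pi.sub_apply, sub_eq_zero] at hz
  refine ⟨z, hz.symm, fun z' hz' => hF.injective ?_⟩
  simp only [hz', hz, sub_self]

noncomputable def expRatio (x : ℝ) : ℝ := (dslope exp 0 (-x))⁻¹

theorem expRatio_zero : expRatio 0 = 1 := by simp [expRatio, dslope_same]

theorem expRatio_of_ne {x : ℝ} (hx : x ≠ 0) : expRatio x = x / (1 - exp (-x)) := by
  rw [expRatio, dslope_of_ne _ (neg_ne_zero.2 hx), slope_def_field, exp_zero, inv_div,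
    sub_zero, ← neg_sub, div_neg, neg_div, neg_neg]

theorem dslope_exp_zero_pos (x : ℝ) : 0 < dslope exp 0 x := by
  rcases eq_or_ne x 0 with rfl | hx
  · simp [dslope_same]
  rw [dslope_of_ne _ hx, slope_def_field, exp_zero, sub_zero]
  rcases hx.lt_or_gt with hx | hx
  · exact div_pos_of_neg_of_neg (by simpa using exp_lt_one_iff.2 hx) hx
  · exact div_pos (by simpa using one_lt_exp_iff.2 hx) hx

theorem strictMono_expRatio : StrictMono expRatio := fun _ _ hxy =>
  inv_strictAnti₀ (dslope_exp_zero_pos _) <|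
    strictConvexOn_exp.strictMonoOn_dslope (mem_univ 0) differentiableAt_exp trivial trivial
      (neg_lt_neg hxy)

theorem continuous_expRatio : Continuous expRatio :=
  have h : Continuous (dslope exp 0) := continuousOn_univ.1 <|
    (continuousOn_dslope univ_mem).2 ⟨continuous_exp.continuousOn, differentiableAt_exp⟩
  (h.comp continuous_neg).inv₀ fun _ => (dslope_exp_zero_pos _).ne'

theorem lt_expRatio {x : ℝ} (hx : 0 < x) : x < expRatio x := by
  rw [expRatio_of_ne hx.ne', lt_div_iff₀ (by simpa using exp_lt_one_iff.2 (neg_lt_zero.2 hx))]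
  nlinarith [exp_pos (-x)]

theorem tendsto_expRatio_atTop : Tendsto expRatio atTop atTop :=
  tendsto_atTop_mono' _ ((eventually_gt_atTop 0).mono fun _ hx => (lt_expRatio hx).le) tendsto_id

theorem tendsto_expRatio_atBot : Tendsto expRatio atBot (𝓝 0) := by
  refine ((tendsto_div_pow_mul_exp_add_atTop 1 (-1) 1 one_ne_zero.symm).comp
    tendsto_neg_atBot_atTop).congr' ?_
  filter_upwards [eventually_lt_atBot 0] with x hx
  rw [expRatio_of_ne hx.ne, Function.comp_apply, pow_one, one_mul, ← sub_eq_add_neg, ← neg_sub,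
    div_neg, neg_div, neg_neg]

section ExpSum

variable {s : Finset ℕ} {w : ℕ → ℝ} {a : ℝ}

theorem antitone_sum_mul_exp (hw : ∀ k ∈ s, 0 ≤ w k) (ha : 0 ≤ a) :
    Antitone fun l => ∑ k ∈ s, w k * exp (-(k : ℝ) * a * l) := fun _ _ hxy =>
  Finset.sum_le_sum fun k hk => mul_le_mul_of_nonneg_left (exp_le_exp.2 <|
    mul_le_mul_of_nonpos_left hxy (by nlinarith [k.cast_nonneg (α := ℝ)])) (hw k hk)

theorem le_sum_mul_exp (hw : ∀ k ∈ s, 0 ≤ w k) (h0 : 0 ∈ s) (l : ℝ) :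
    w 0 ≤ ∑ k ∈ s, w k * exp (-(k : ℝ) * a * l) := by
  simpa using Finset.single_le_sum (f := fun k => w k * exp (-(k : ℝ) * a * l))
    (fun k hk => mul_nonneg (hw k hk) (exp_pos _).le) h0

end ExpSum

theorem characteristic_equation_unique_root
    (b a : ℝ) (hb : 0 < b) (ha : 0 < a) (m : ℕ) (w : ℕ → ℝ)
    (hw : ∀ k, k ≤ m → 0 ≤ w k) (hw0 : 0 < w 0)
    (hwsum : ∑ k ∈ Finset.range (m + 1), w k = 1)
    (L R : ℝ → ℝ)
    (hL : ∀ l : ℝ, L l = b * ∑ k ∈ Finset.range (m + 1),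
        w k * Real.exp (-(k : ℝ) * a * l))
    (hR : ∀ l : ℝ, l ≠ 0 → R l = a * l / (1 - Real.exp (-(a * l))))
    (hR0 : R 0 = 1) :
    (∃! l : ℝ, L l = R l) ∧
    ∀ l : ℝ, L l = R l →
      ((1 < b → 0 < l) ∧ (b = 1 → l = 0) ∧ (b < 1 → l < 0)) := by
  have hR' : R = fun l => expRatio (a * l) := funext fun l => by
    rcases eq_or_ne l 0 with rfl | hl
    · rw [hR0, mul_zero, expRatio_zero]
    · rw [hR l hl, expRatio_of_ne (mul_ne_zero ha.ne' hl)]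
  have hRmono : StrictMono R := hR' ▸ strictMono_expRatio.comp (strictMono_mul_left_of_pos ha)
  have hRc : Continuous R := hR' ▸ continuous_expRatio.comp (continuous_const_mul a)
  have hw' : ∀ k ∈ Finset.range (m + 1), 0 ≤ w k :=
    fun k hk => hw k (Finset.mem_range_succ_iff.1 hk)
  have hLanti : Antitone L := fun x y hxy => by
    rw [hL, hL]; exact mul_le_mul_of_nonneg_left (antitone_sum_mul_exp hw' ha.le hxy) hb.le
  have hLc : Continuous L := by rw [funext hL]; fun_prop
  have hL0 : L 0 = b := by simp [hL, hwsum]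
  obtain ⟨x, hx⟩ : ∃ x, R x < b * w 0 := by
    rw [hR']
    exact ((tendsto_expRatio_atBot.comp (tendsto_id.const_mul_atBot ha)).eventually
      (gt_mem_nhds (mul_pos hb hw0))).exists
  have hLx : b * w 0 ≤ L x :=
    (hL x).symm ▸ mul_le_mul_of_nonneg_left (le_sum_mul_exp hw' (by simp) x) hb.le
  obtain ⟨y, hy, hy0⟩ : ∃ y, b ≤ R y ∧ 0 ≤ y := by
    rw [hR']
    exact ((tendsto_expRatio_atTop.comp (tendsto_id.const_mul_atTop ha)).eventually_ge_atTop b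
      |>.and (eventually_ge_atTop 0)).exists
  refine ⟨existsUnique_eq_of_antitone_of_strictMono hLanti hRmono hLc hRc (hx.le.trans hLx)
    ((hLanti hy0).trans (hL0 ▸ hy)), fun l hl => ?_⟩
  have hF := hRmono.sub_antitone hLanti
  have hFl : R l - L l = 0 := by rw [hl, sub_self]
  have hF0 : R 0 - L 0 = 1 - b := by rw [hR0, hL0]
  refine ⟨fun h => hF.lt_iff_lt.1 ?_, fun h => hF.injective ?_, fun h => hF.lt_iff_lt.1 ?_⟩ <;>
    linarith
end

section
/- Let a, b, h > 0 with b > 1 and define 𝓗(λ) = b·e^{-hλ} - 1 - aλ. Then 𝓗 has a unique root λ♭ on (0,∞), and this root satisfies λ♭ > (b-1)/(bh + a). -/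
/-!
`𝓗(λ) = b e^{-hλ} - 1 - aλ` is strictly decreasing. The tangent-line bound `e^{-x} > 1 - x`
gives `𝓗(λ) > b - 1 - (bh + a)λ`, which vanishes at `λ₀ = (b-1)/(bh+a)`, so `𝓗(λ₀) > 0`; and
`e^{-x} ≤ 1` gives `𝓗(λ) ≤ b - 1 - aλ`, so `𝓗((b-1)/a) ≤ 0`. The intermediate value theorem
yields a root in `[λ₀, (b-1)/a]`, and monotonicity makes it unique and larger than `λ₀`.
-/

open Real

noncomputable def auxH (a b h l : ℝ) : ℝ := b * exp (-(h * l)) - 1 - a * l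

variable {a b h : ℝ}

theorem continuous_auxH : Continuous (auxH a b h) := by
  unfold auxH
  fun_prop

theorem auxH_strictAnti (ha : 0 ≤ a) (hb : 0 < b) (hh : 0 < h) : StrictAnti (auxH a b h) := by
  intro x y hxy
  have hexp : exp (-(h * y)) < exp (-(h * x)) := exp_lt_exp.mpr (by nlinarith)
  have hlin : a * x ≤ a * y := mul_le_mul_of_nonneg_left hxy.le ha
  unfold auxH
  nlinarith

theorem sub_mul_lt_auxH {l : ℝ} (hb : 0 < b) (hl : h * l ≠ 0) :
    b - 1 - (b * h + a) * l < auxH a b h l := by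
  have htangent : -(h * l) + 1 < exp (-(h * l)) := add_one_lt_exp (neg_ne_zero.mpr hl)
  unfold auxH
  nlinarith

theorem auxH_le_sub_mul {l : ℝ} (hb : 0 ≤ b) (hl : 0 ≤ h * l) : auxH a b h l ≤ b - 1 - a * l := by
  have hexp : exp (-(h * l)) ≤ 1 := exp_le_one_iff.mpr (neg_nonpos.mpr hl)
  unfold auxH
  nlinarith

theorem auxiliary_H_unique_root (a b h : ℝ) (ha : 0 < a) (hb : 1 < b) (hh : 0 < h) :
    (∃! l : ℝ, 0 < l ∧ b * Real.exp (-(h * l)) - 1 - a * l = 0) ∧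
    ∀ l : ℝ, 0 < l → b * Real.exp (-(h * l)) - 1 - a * l = 0 →
      (b - 1) / (b * h + a) < l := by
  have hb0 : 0 < b := by linarith
  have hden : 0 < b * h + a := by positivity
  have hanti := auxH_strictAnti ha.le hb0 hh
  set l₀ := (b - 1) / (b * h + a)
  set l₁ := (b - 1) / a
  have hl₀ : 0 < l₀ := div_pos (by linarith) hden
  have hl₁ : 0 < l₁ := div_pos (by linarith) ha
  have hpos : 0 < auxH a b h l₀ := by
    have hbound := sub_mul_lt_auxH (a := a) hb0 (mul_pos hh hl₀).ne'
    have hl₀_eq : (b * h + a) * l₀ = b - 1 := mul_div_cancel₀ _ hden.ne'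
    linarith
  have hnonpos : auxH a b h l₁ ≤ 0 := by
    have hbound := auxH_le_sub_mul (a := a) hb0.le (mul_pos hh hl₁).le
    have hl₁_eq : a * l₁ = b - 1 := mul_div_cancel₀ _ ha.ne'
    linarith
  have hroot_gt : ∀ l, auxH a b h l = 0 → l₀ < l := fun l hl =>
    hanti.lt_iff_gt.mp (hl ▸ hpos)
  have hl₀₁ : l₀ ≤ l₁ := (hanti.lt_iff_gt.mp (hnonpos.trans_lt hpos)).le
  obtain ⟨c, -, hc⟩ :=
    intermediate_value_Icc' hl₀₁ continuous_auxH.continuousOn ⟨hnonpos, hpos.le⟩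
  exact ⟨⟨c, ⟨hl₀.trans (hroot_gt c hc), hc⟩, fun y hy => hanti.injective (hy.2.trans hc.symm)⟩,
    fun l _ => hroot_gt l⟩
end

section
/- Let v : ℝ → ℝ be positive and continuous, let ℓ > 0, and let P : ℝ → (0,1) be continuously differentiable. Suppose there is a constant t_p such that ∫_x^{x+ℓ/P(x)} 1/v(A^P(z)) dz = t_p for all x ∈ ℝ, where A^P is continuous. Then P satisfies (1 - ℓP'(x)/P(x)²)·(1/v(A^P(x + ℓ/P(x)))) = 1/v(A^P(x)) for all x ∈ ℝ. -/
/-! With `F` a primitive of the continuous integrand `f`, the period is `F (L x) - F x`. Its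
derivative `L' x • f (L x) - f x` vanishes because the period is constant, which is the profile
equation for `L x = x + ℓ / P x`. -/

open Filter Topology intervalIntegral

section IntegralToMovingEndpoint

variable {E : Type*} [NormedAddCommGroup E] [NormedSpace ℝ E] [CompleteSpace E]
  {f : ℝ → E} {L : ℝ → ℝ} {L' x : ℝ}

theorem Continuous.hasDerivAt_integral_self_to_comp (hf : Continuous f)
    (hL : HasDerivAt L L' x) :
    HasDerivAt (fun y => ∫ z in y..L y, f z) (L' • f (L x) - f x) x := by
  have hsplit : (fun y => ∫ z in y..L y, f z)
      = fun y => (∫ z in 0..L y, f z) - ∫ z in 0..y, f z :=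
    funext fun y => (integral_interval_sub_left (hf.intervalIntegrable _ _)
      (hf.intervalIntegrable _ _)).symm
  rw [hsplit]
  exact ((hf.integral_hasStrictDerivAt 0 (L x)).hasDerivAt.scomp x hL).sub
    (hf.integral_hasStrictDerivAt 0 x).hasDerivAt

theorem Continuous.smul_apply_eq_of_integral_self_to_eventually_const (hf : Continuous f)
    (hL : HasDerivAt L L' x) {c : E} (hc : ∀ᶠ y in 𝓝 x, ∫ z in y..L y, f z = c) :
    L' • f (L x) = f x := by
  have hzero : HasDerivAt (fun y => ∫ z in y..L y, f z) 0 x :=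
    (hasDerivAt_const x c).congr_of_eventuallyEq hc
  exact sub_eq_zero.mp (hf.hasDerivAt_integral_self_to_comp hL |>.unique hzero)

end IntegralToMovingEndpoint

theorem HasDerivAt.id_add_const_div {P : ℝ → ℝ} {P' x : ℝ} (hP : HasDerivAt P P' x)
    (hPx : P x ≠ 0) (ℓ : ℝ) :
    HasDerivAt (fun y => y + ℓ / P y) (1 - ℓ * P' / P x ^ 2) x := by
  have hquot := (hasDerivAt_const x ℓ).fun_div hP hPx
  exact (hasDerivAt_id' x).fun_add hquot |>.congr_deriv (by ring)

theorem period_implies_profile_equation_general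
    (v : ℝ → ℝ) (hv_pos : ∀ y, 0 < v y) (hv_cont : Continuous v)
    (ℓ : ℝ)
    (P P' : ℝ → ℝ)
    (hP : ∀ x, 0 < P x ∧ P x < 1)
    (hPderiv : ∀ x, HasDerivAt P (P' x) x)
    (A : ℝ → ℝ) (hA_cont : Continuous A)
    (tp : ℝ)
    (hperiod : ∀ x : ℝ, ∫ z in x..(x + ℓ / P x), 1 / v (A z) = tp) :
    ∀ x : ℝ, (1 - ℓ * P' x / (P x) ^ 2) * (1 / v (A (x + ℓ / P x)))
      = 1 / v (A x) := by
  intro x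
  have hf : Continuous fun z => 1 / v (A z) :=
    continuous_const.div (hv_cont.comp hA_cont) fun z => (hv_pos _).ne'
  exact hf.smul_apply_eq_of_integral_self_to_eventually_const
    ((hPderiv x).id_add_const_div (hP x).1.ne' ℓ) (Eventually.of_forall hperiod)

theorem period_implies_profile_equation
    (v : ℝ → ℝ) (hv_pos : ∀ y, 0 < v y) (hv_cont : Continuous v)
    (ℓ : ℝ) (hℓ : 0 < ℓ)
    (P P' : ℝ → ℝ)
    (hP : ∀ x, 0 < P x ∧ P x < 1)
    (hPderiv : ∀ x, HasDerivAt P (P' x) x)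
    (hP'cont : Continuous P')
    (A : ℝ → ℝ) (hA_cont : Continuous A)
    (tp : ℝ)
    (hperiod : ∀ x : ℝ, ∫ z in x..(x + ℓ / P x), 1 / v (A z) = tp) :
    ∀ x : ℝ, (1 - ℓ * P' x / (P x) ^ 2) * (1 / v (A (x + ℓ / P x)))
      = 1 / v (A x) :=
  period_implies_profile_equation_general v hv_pos hv_cont ℓ P P' hP hPderiv A hA_cont tp hperiod
end

section
/- Let v : ℝ → ℝ be positive continuous, ℓ > 0, and P : ℝ → (0,1) continuous. Suppose ∫_x^{x+ℓ/P(x)} 1/v(A^P(z)) dz = t_p for all x, where A^P : ℝ → ℝ is continuous with lim_{x→+∞} P(x) = ρ⁺ ∈ (0,1) and lim_{x→+∞} A^P(x) = ρ⁺. Then t_p = ℓ/(ρ⁺·v(ρ⁺)). -/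
/-!
The window `[x, x + ℓ / P x]` has length tending to `ℓ / ρ⁺`, and on it the integrand
`1 / v (A z)` is uniformly close to `1 / v ρ⁺` once `x` is large. Hence the integral tends
to `(ℓ / ρ⁺) · (1 / v ρ⁺)` as `x → +∞`; being constantly `t_p`, it equals this limit.
-/

open Filter Topology MeasureTheory

variable {E : Type*} [NormedAddCommGroup E] [NormedSpace ℝ E]

theorem tendsto_intervalIntegral_add_of_tendsto_zero {g : ℝ → E} {d : ℝ → ℝ} {M : ℝ}
    (hg : Tendsto g atTop (𝓝 0)) (hd : ∀ᶠ x in atTop, |d x| ≤ M) :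
    Tendsto (fun x => ∫ z in x..x + d x, g z) atTop (𝓝 0) := by
  rw [NormedAddGroup.tendsto_nhds_zero]
  intro ε hε
  set δ := ε / (|M| + 1)
  obtain ⟨N, hN⟩ := eventually_atTop.1 <|
    NormedAddGroup.tendsto_nhds_zero.1 hg δ (by positivity)
  filter_upwards [hd, eventually_ge_atTop (N + |M|)] with x hdx hx
  have hdM : |d x| ≤ |M| := hdx.trans (le_abs_self M)
  have hbound : ∀ z ∈ Set.uIoc x (x + d x), ‖g z‖ ≤ δ := fun z hz => by
    have hNmin : N ≤ min x (x + d x) :=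
      le_min (by linarith [abs_nonneg M]) (by linarith [neg_abs_le (d x)])
    exact (hN z (hNmin.trans (Set.mem_Ioc.1 hz).1.le)).le
  calc ‖∫ z in x..x + d x, g z‖ ≤ δ * |x + d x - x| :=
        intervalIntegral.norm_integral_le_of_norm_le_const hbound
    _ ≤ δ * |M| := by rw [add_sub_cancel_left]; gcongr
    _ < δ * (|M| + 1) := by gcongr; linarith
    _ = ε := div_mul_cancel₀ ε (by positivity)

theorem tendsto_intervalIntegral_add_of_tendsto [CompleteSpace E] {f : ℝ → E} {c : E}
    {d : ℝ → ℝ} {L : ℝ} (hf : Tendsto f atTop (𝓝 c))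
    (hfi : ∀ a b, IntervalIntegrable f volume a b) (hd : Tendsto d atTop (𝓝 L)) :
    Tendsto (fun x => ∫ z in x..x + d x, f z) atTop (𝓝 (L • c)) := by
  have hsplit : ∀ x, ∫ z in x..x + d x, f z = d x • c + ∫ z in x..x + d x, (f z - c) := by
    intro x
    rw [intervalIntegral.integral_sub (hfi _ _) intervalIntegrable_const,
      intervalIntegral.integral_const, add_sub_cancel_left, add_sub_cancel]
  have hdbound : ∀ᶠ x in atTop, |d x| ≤ |L| + 1 :=
    hd.abs.eventually (eventually_le_nhds (lt_add_one _))
  simp_rw [hsplit]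
  simpa using (hd.smul_const c).add <|
    tendsto_intervalIntegral_add_of_tendsto_zero (tendsto_sub_nhds_zero_iff.2 hf) hdbound

theorem period_value_general
    (v : ℝ → ℝ) (hv_pos : ∀ y, 0 < v y) (hv_cont : Continuous v)
    (ℓ : ℝ)
    (P : ℝ → ℝ)
    (A : ℝ → ℝ) (hA_cont : Continuous A)
    (tp : ℝ)
    (hperiod : ∀ x : ℝ, ∫ z in x..(x + ℓ / P x), 1 / v (A z) = tp)
    (ρp : ℝ) (hρp : 0 < ρp ∧ ρp < 1)
    (hPlim : Tendsto P atTop (nhds ρp))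
    (hAlim : Tendsto A atTop (nhds ρp)) :
    tp = ℓ / (ρp * v ρp) := by
  have hinv_cont : Continuous fun y => 1 / v y :=
    continuous_const.div hv_cont fun y => (hv_pos y).ne'
  have hwindow : Tendsto (fun x => ℓ / P x) atTop (𝓝 (ℓ / ρp)) :=
    tendsto_const_nhds.div hPlim hρp.1.ne'
  have hlim := tendsto_intervalIntegral_add_of_tendsto ((hinv_cont.tendsto ρp).comp hAlim)
    (hinv_cont.comp hA_cont).intervalIntegrable hwindow
  simp only [Function.comp_def, hperiod] at hlim
  rw [tendsto_nhds_unique tendsto_const_nhds hlim, smul_eq_mul]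
  field_simp [(hv_pos ρp).ne', hρp.1.ne']

theorem period_value
    (v : ℝ → ℝ) (hv_pos : ∀ y, 0 < v y) (hv_cont : Continuous v)
    (ℓ : ℝ) (hℓ : 0 < ℓ)
    (P : ℝ → ℝ) (hPcont : Continuous P)
    (hP : ∀ x, 0 < P x ∧ P x < 1)
    (A : ℝ → ℝ) (hA_cont : Continuous A)
    (tp : ℝ)
    (hperiod : ∀ x : ℝ, ∫ z in x..(x + ℓ / P x), 1 / v (A z) = tp)
    (ρp : ℝ) (hρp : 0 < ρp ∧ ρp < 1)
    (hPlim : Tendsto P atTop (nhds ρp))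
    (hAlim : Tendsto A atTop (nhds ρp)) :
    tp = ℓ / (ρp * v ρp) :=
  period_value_general v hv_pos hv_cont ℓ P A hA_cont tp hperiod ρp hρp hPlim hAlim
end

section
/- Let h > 0, w : [0,h] → ℝ nonnegative with ∫_0^h w = 1, and v : ℝ → (0,∞) Lipschitz such that ρ ↦ 1/v(ρ) has Lipschitz constant L_v. Let f̄ > 0, κ = sup w, and γ = 2·f̄·L_v·κ (assume γ > 0). For bounded continuous u : (-∞, x₀] → ℝ extended to x > x₀ by a fixed continuous function Φ, define (𝒫u)(x) = f̄ / v(∫_0^h u(x+s) w(s) ds). Then for any two such u₁, u₂ agreeing on (x₀, ∞), and for all x ≤ x₀: |(𝒫u₁)(x) - (𝒫u₂)(x)| ≤ (1/2)·e^{-γx}·sup_{y ≤ x₀}(e^{γy}|u₁(y) - u₂(y)|). -/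
theorem picard_contraction
    (h : ℝ) (hh : 0 < h)
    (w : ℝ → ℝ) (hw_nonneg : ∀ s ∈ Set.Icc (0:ℝ) h, 0 ≤ w s)
    (hw_int : ∫ s in (0:ℝ)..h, w s = 1)
    (v : ℝ → ℝ) (hv_pos : ∀ ρ, 0 < v ρ)
    (Lv : ℝ) (hLv : ∀ a b : ℝ, |1 / v a - 1 / v b| ≤ Lv * |a - b|)
    (fbar : ℝ) (hfbar : 0 < fbar)
    (κ : ℝ) (hκ : ∀ s ∈ Set.Icc (0:ℝ) h, w s ≤ κ)
    (γ : ℝ) (hγdef : γ = 2 * fbar * Lv * κ) (hγ : 0 < γ)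
    (x₀ : ℝ) (u₁ u₂ : ℝ → ℝ)
    (hu₁ : Continuous u₁) (hu₂ : Continuous u₂)
    (hb₁ : ∃ M, ∀ x, |u₁ x| ≤ M) (hb₂ : ∃ M, ∀ x, |u₂ x| ≤ M)
    (hagree : ∀ x, x₀ < x → u₁ x = u₂ x)
    (δ : ℝ) (hδ : ∀ y, y ≤ x₀ → Real.exp (γ * y) * |u₁ y - u₂ y| ≤ δ) :
    ∀ x, x ≤ x₀ →
      |fbar / v (∫ s in (0:ℝ)..h, u₁ (x + s) * w s)
        - fbar / v (∫ s in (0:ℝ)..h, u₂ (x + s) * w s)|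
      ≤ (1 / 2) * Real.exp (-(γ * x)) * δ := by
  intro x hx
  have h0mem : (0:ℝ) ∈ Set.Icc (0:ℝ) h := ⟨le_refl _, hh.le⟩
  have hκ0 : 0 ≤ κ := le_trans (hw_nonneg 0 h0mem) (hκ 0 h0mem)
  have hLκ : 0 < Lv * κ := by
    have h2 : 0 < 2 * fbar * Lv * κ := hγdef ▸ hγ
    nlinarith
  have hLv0 : 0 < Lv := by nlinarith
  have hκpos : 0 < κ := by nlinarith
  have hδ0 : 0 ≤ δ := by
    have h1 := hδ x₀ le_rfl
    nlinarith [Real.exp_pos (γ * x₀), abs_nonneg (u₁ x₀ - u₂ x₀),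
      mul_nonneg (Real.exp_pos (γ * x₀)).le (abs_nonneg (u₁ x₀ - u₂ x₀))]
  -- pointwise bound
  have hpt : ∀ y : ℝ, |u₁ y - u₂ y| ≤ δ * Real.exp (-(γ * y)) := by
    intro y
    rcases le_or_gt y x₀ with hy | hy
    · have h1 := hδ y hy
      calc |u₁ y - u₂ y|
          = Real.exp (-(γ * y)) * (Real.exp (γ * y) * |u₁ y - u₂ y|) := by
            rw [← mul_assoc, ← Real.exp_add]; simp
        _ ≤ Real.exp (-(γ * y)) * δ :=
            mul_le_mul_of_nonneg_left h1 (Real.exp_pos _).le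
        _ = δ * Real.exp (-(γ * y)) := mul_comm _ _
    · rw [hagree y hy, sub_self, abs_zero]
      positivity
  -- integrability
  have hwInt : IntervalIntegrable w MeasureTheory.volume 0 h := by
    by_contra hc
    rw [intervalIntegral.integral_undef hc] at hw_int
    norm_num at hw_int
  have hc₁ : ContinuousOn (fun s => u₁ (x + s)) (Set.uIcc (0:ℝ) h) :=
    (hu₁.comp (continuous_const.add continuous_id)).continuousOn
  have hc₂ : ContinuousOn (fun s => u₂ (x + s)) (Set.uIcc (0:ℝ) h) :=
    (hu₂.comp (continuous_const.add continuous_id)).continuousOn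
  have hInt₁ : IntervalIntegrable (fun s => u₁ (x + s) * w s) MeasureTheory.volume 0 h :=
    hwInt.continuousOn_mul hc₁
  have hInt₂ : IntervalIntegrable (fun s => u₂ (x + s) * w s) MeasureTheory.volume 0 h :=
    hwInt.continuousOn_mul hc₂
  set A₁ := ∫ s in (0:ℝ)..h, u₁ (x + s) * w s with hA₁
  set A₂ := ∫ s in (0:ℝ)..h, u₂ (x + s) * w s with hA₂
  set F : ℝ → ℝ := fun s => (u₁ (x + s) - u₂ (x + s)) * w s with hF
  set G : ℝ → ℝ := fun s => δ * Real.exp (-(γ * (x + s))) * κ with hG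
  have hFInt : IntervalIntegrable F MeasureTheory.volume 0 h := by
    have : F = fun s => u₁ (x + s) * w s - u₂ (x + s) * w s := by
      funext s; simp [hF, sub_mul]
    rw [this]; exact hInt₁.sub hInt₂
  have hGInt : IntervalIntegrable G MeasureTheory.volume 0 h := by
    apply Continuous.intervalIntegrable
    continuity
  have hAsub : A₁ - A₂ = ∫ s in (0:ℝ)..h, F s := by
    rw [hA₁, hA₂, ← intervalIntegral.integral_sub hInt₁ hInt₂]
    congr 1; funext s; simp [hF, sub_mul]
  -- |∫ F| ≤ ∫ G
  have hFabsInt : IntervalIntegrable (fun s => |F s|) MeasureTheory.volume 0 h := hFInt.abs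
  have hptF : ∀ s ∈ Set.Icc (0:ℝ) h, |F s| ≤ G s := by
    intro s hs
    have hws := hw_nonneg s hs
    have := hpt (x + s)
    calc |F s| = |u₁ (x + s) - u₂ (x + s)| * w s := by
          rw [hF]; simp [abs_mul, abs_of_nonneg hws]
      _ ≤ (δ * Real.exp (-(γ * (x + s)))) * κ :=
          mul_le_mul this (hκ s hs) hws (by positivity)
      _ = G s := by rw [hG]
  have habs : |A₁ - A₂| ≤ ∫ s in (0:ℝ)..h, G s := by
    rw [hAsub]
    calc |∫ s in (0:ℝ)..h, F s| ≤ ∫ s in (0:ℝ)..h, |F s| :=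
          intervalIntegral.abs_integral_le_integral_abs hh.le
      _ ≤ ∫ s in (0:ℝ)..h, G s :=
          intervalIntegral.integral_mono_on hh.le hFabsInt hGInt hptF
  -- compute ∫ G
  have hexp : (∫ s in (0:ℝ)..h, Real.exp (-γ * s)) =
      (1 - Real.exp (-γ * h)) / γ := by
    have hne : -γ ≠ 0 := neg_ne_zero.mpr hγ.ne'
    have hcomp := intervalIntegral.integral_comp_mul_left (a := (0:ℝ)) (b := h)
      (fun t => Real.exp t) (c := -γ) hne
    simp only [mul_zero, integral_exp, Real.exp_zero, smul_eq_mul] at hcomp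
    rw [hcomp]
    field_simp
    ring
  have hGval : (∫ s in (0:ℝ)..h, G s) =
      δ * κ * Real.exp (-(γ * x)) * ((1 - Real.exp (-γ * h)) / γ) := by
    have : ∀ s : ℝ, G s = (δ * κ * Real.exp (-(γ * x))) * Real.exp (-γ * s) := by
      intro s
      rw [hG]
      simp only [neg_mul, mul_add, neg_add]
      rw [Real.exp_add]
      ring
    rw [show (fun s => G s) = fun s => (δ * κ * Real.exp (-(γ * x))) * Real.exp (-γ * s)
        from funext this]
    rw [intervalIntegral.integral_const_mul, hexp]
  have hGbound : (∫ s in (0:ℝ)..h, G s) ≤ δ * κ * Real.exp (-(γ * x)) / γ := by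
    have he : (0:ℝ) ≤ Real.exp (-γ * h) := (Real.exp_pos _).le
    have hE : (0:ℝ) ≤ δ * κ * Real.exp (-(γ * x)) := by positivity
    have hfr : (1 - Real.exp (-γ * h)) / γ ≤ 1 / γ := by
      gcongr
      linarith
    calc (∫ s in (0:ℝ)..h, G s)
        = δ * κ * Real.exp (-(γ * x)) * ((1 - Real.exp (-γ * h)) / γ) := hGval
      _ ≤ δ * κ * Real.exp (-(γ * x)) * (1 / γ) := mul_le_mul_of_nonneg_left hfr hE
      _ = δ * κ * Real.exp (-(γ * x)) / γ := by rw [mul_one_div]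
  -- main chain
  have hfrac : fbar / v A₁ - fbar / v A₂ = fbar * (1 / v A₁ - 1 / v A₂) := by
    rw [mul_sub, mul_one_div, mul_one_div]
  calc |fbar / v A₁ - fbar / v A₂| = fbar * |1 / v A₁ - 1 / v A₂| := by
        rw [hfrac, abs_mul, abs_of_pos hfbar]
    _ ≤ fbar * (Lv * |A₁ - A₂|) :=
        mul_le_mul_of_nonneg_left (hLv A₁ A₂) hfbar.le
    _ ≤ fbar * (Lv * (δ * κ * Real.exp (-(γ * x)) / γ)) := by
        apply mul_le_mul_of_nonneg_left _ hfbar.le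
        exact mul_le_mul_of_nonneg_left (le_trans habs hGbound) hLv0.le
    _ ≤ (1 / 2) * Real.exp (-(γ * x)) * δ := by
        subst hγdef
        apply le_of_eq
        have h1 : fbar ≠ 0 := hfbar.ne'
        have h2 : Lv ≠ 0 := hLv0.ne'
        have h3 : κ ≠ 0 := hκpos.ne'
        field_simp
end

section
/- Let h > 0, w : [0,h] → ℝ nonnegative with ∫_0^h w = 1, and v : ℝ → ℝ strictly decreasing. Suppose Q₁, Q₂ : ℝ → ℝ are continuous, nondecreasing, satisfy Qᵢ(x)·v(𝒜(Qᵢ;x)) = f̄ for all x (same constant f̄ > 0), and there exists y ∈ ℝ with Q₁(y) = Q₂(y) > 0, Q₁(x) > Q₂(x) for all x > y, and w > 0 on a set of positive measure. Then a contradiction follows; i.e., no such configuration exists. -/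
open MeasureTheory

theorem profile_uniqueness_contradiction
    (h : ℝ) (hh : 0 < h)
    (w : ℝ → ℝ) (hw_nonneg : ∀ s ∈ Set.Icc (0:ℝ) h, 0 ≤ w s)
    (hw_int : ∫ s in (0:ℝ)..h, w s = 1)
    (hw_pos : 0 < volume {s | s ∈ Set.Ioc (0:ℝ) h ∧ 0 < w s})
    (v : ℝ → ℝ) (hv : StrictAnti v)
    (Q₁ Q₂ : ℝ → ℝ) (hQ₁c : Continuous Q₁) (hQ₂c : Continuous Q₂)
    (hQ₁m : Monotone Q₁) (hQ₂m : Monotone Q₂)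
    (fbar : ℝ) (hfbar : 0 < fbar)
    (hid₁ : ∀ x, Q₁ x * v (∫ s in (0:ℝ)..h, Q₁ (x + s) * w s) = fbar)
    (hid₂ : ∀ x, Q₂ x * v (∫ s in (0:ℝ)..h, Q₂ (x + s) * w s) = fbar)
    (y : ℝ) (hy_eq : Q₁ y = Q₂ y) (hy_pos : 0 < Q₁ y)
    (hy_gt : ∀ x, y < x → Q₂ x < Q₁ x) :
    False := by
  -- w is interval integrable
  have hw_i : IntervalIntegrable w volume 0 h := by
    by_contra hc
    rw [intervalIntegral.integral_undef hc] at hw_int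
    norm_num at hw_int
  have hwIoc : IntegrableOn w (Set.Ioc 0 h) volume := hw_i.1
  have hwIcc : IntegrableOn w (Set.Icc 0 h) volume :=
    (integrableOn_Icc_iff_integrableOn_Ioc).mpr hwIoc
  have key : ∀ Q : ℝ → ℝ, Continuous Q →
      IntegrableOn (fun s => Q (y + s) * w s) (Set.Ioc 0 h) volume := by
    intro Q hQ
    have : IntegrableOn (fun s => Q (y + s) * w s) (Set.Icc 0 h) volume :=
      IntegrableOn.continuousOn_mul
        ((hQ.comp (continuous_const.add continuous_id)).continuousOn) hwIcc isCompact_Icc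
    exact this.mono_set Set.Ioc_subset_Icc_self
  have hI1 := key Q₁ hQ₁c
  have hI2 := key Q₂ hQ₂c
  -- the difference integrand
  set D : ℝ → ℝ := fun s => (Q₁ (y + s) - Q₂ (y + s)) * w s with hD
  have hDnn : ∀ s ∈ Set.Ioc (0:ℝ) h, 0 ≤ D s := by
    intro s hs
    have h1 : Q₂ (y + s) < Q₁ (y + s) := hy_gt _ (by linarith [hs.1])
    have h2 : 0 ≤ w s := hw_nonneg s ⟨le_of_lt hs.1, hs.2⟩
    have := sub_nonneg.mpr h1.le
    positivity
  have hDint : IntegrableOn D (Set.Ioc 0 h) volume := by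
    have : D = fun s => Q₁ (y + s) * w s - Q₂ (y + s) * w s := by
      funext s; simp [hD]; ring
    rw [this]
    exact hI1.sub hI2
  have hDpos : 0 < ∫ s in Set.Ioc (0:ℝ) h, D s := by
    rw [setIntegral_pos_iff_support_of_nonneg_ae
      ((ae_restrict_iff' measurableSet_Ioc).mpr (ae_of_all _ hDnn)) hDint]
    refine lt_of_lt_of_le hw_pos (measure_mono ?_)
    intro s hs
    obtain ⟨hs1, hs2⟩ := hs
    refine ⟨?_, hs1⟩
    have h1 : Q₂ (y + s) < Q₁ (y + s) := hy_gt _ (by linarith [hs1.1])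
    have : 0 < D s := by
      have := sub_pos.mpr h1
      simp only [hD]; positivity
    exact Function.mem_support.mpr (ne_of_gt this)
  -- A₂ y < A₁ y
  have hA : (∫ s in (0:ℝ)..h, Q₂ (y + s) * w s) < ∫ s in (0:ℝ)..h, Q₁ (y + s) * w s := by
    rw [intervalIntegral.integral_of_le hh.le, intervalIntegral.integral_of_le hh.le]
    have hsub : (∫ s in Set.Ioc (0:ℝ) h, D s)
        = (∫ s in Set.Ioc (0:ℝ) h, Q₁ (y + s) * w s)
          - ∫ s in Set.Ioc (0:ℝ) h, Q₂ (y + s) * w s := by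
      rw [← integral_sub hI1 hI2]
      congr 1; funext s; simp [hD]; ring
    linarith [hsub ▸ hDpos]
  have hvlt : v (∫ s in (0:ℝ)..h, Q₁ (y + s) * w s)
      < v (∫ s in (0:ℝ)..h, Q₂ (y + s) * w s) := hv hA
  have h1 := hid₁ y
  have h2 := hid₂ y
  rw [← hy_eq] at h2
  have := mul_left_cancel₀ (ne_of_gt hy_pos) (h1.trans h2.symm)
  linarith
end

section
/- Let v be strictly decreasing with f(ρ) = ρv(ρ), and Q : ℝ → (0,1) nondecreasing satisfying Q(x)·v(𝒜(Q;x)) = f̄ = f(ρ⁺) for all x, with the estimate (f(𝒜(Q;x)) - f̄)/v(𝒜(Q;x)) ≤ Q(x+h) - Q(x) and with v(𝒜(Q;x)) > 0. Suppose Q⁺ := lim_{x→+∞} Q(x) exists, 𝒜(Q;x) → Q⁺, Q⁺ < ρ⁺, and f is strictly decreasing on [Q⁺, ρ⁺] (so f(Q⁺) > f̄). Then a contradiction follows; hence if f(Q⁺) > f̄ it is impossible that Q(x+h) - Q(x) → 0, i.e., Q⁺ must equal ρ⁺. -/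
open Filter

theorem asymptotic_value_contradiction
    (h : ℝ) (hh : 0 < h)
    (v : ℝ → ℝ) (hv_anti : StrictAnti v) (hv_cont : Continuous v)
    (Q : ℝ → ℝ) (hQ : ∀ x, 0 < Q x ∧ Q x < 1) (hQm : Monotone Q)
    (A : ℝ → ℝ)
    (fbar ρp : ℝ) (hfbar_pos : 0 < fbar) (hfbar : fbar = ρp * v ρp)
    (hid : ∀ x, Q x * v (A x) = fbar)
    (hvA_pos : ∀ x, 0 < v (A x))
    (hest : ∀ x, (A x * v (A x) - fbar) / v (A x) ≤ Q (x + h) - Q x)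
    (Qp : ℝ) (hQlim : Tendsto Q atTop (nhds Qp))
    (hAlim : Tendsto A atTop (nhds Qp))
    (hQp_lt : Qp < ρp)
    (hf_anti : StrictAntiOn (fun ρ => ρ * v ρ) (Set.Icc Qp ρp)) :
    False := by
  have hvlim : Tendsto (fun x => Q x * v (A x)) atTop (nhds (Qp * v Qp)) :=
    hQlim.mul ((hv_cont.continuousAt.tendsto).comp hAlim)
  have heq : fbar = Qp * v Qp := by
    have : Tendsto (fun _ : ℝ => fbar) atTop (nhds (Qp * v Qp)) := by
      simpa [hid] using hvlim
    exact tendsto_nhds_unique tendsto_const_nhds this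
  have hlt : ρp * v ρp < Qp * v Qp :=
    hf_anti (Set.mem_Icc.2 ⟨le_refl _, hQp_lt.le⟩)
      (Set.mem_Icc.2 ⟨hQp_lt.le, le_refl _⟩) hQp_lt
  rw [← heq, ← hfbar] at hlt
  exact lt_irrefl _ hlt
end
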